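/- The number of s-decreasing trees for a weak composition s = (s_1,…,s_n) equals the product over i from 1 to n-1 of (1 + s_{n-i+1} + s_{n-i+2} + ⋯ + s_n). -/

import Mathlib

/-- Rooted plane trees whose internal nodes carry a natural-number label and an ordered
list of children; `leaf` is a leaf. -/
inductive LTree : Type
  | leaf : LTree
  | node : ℕ → List LTree → LTree

namespace LTree

/-- The multiset of labels of the internal nodes of a tree. -/
def labels : LTree → Multiset ℕ
  | leaf => 0
  | node a ts => a ::ₘ (ts.attach.map (fun t => labels t.1)).sum
decreasing_by
  have := List.sizeOf_lt_of_mem t.2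
  simp only [node.sizeOf_spec]
  omega

end LTree

/-- `T` is an `s`-decreasing tree structure: every internal node labeled `a` has exactly
`s a + 1` children, and all labels of internal descendants of `a` are smaller than `a`. -/
inductive IsSDec (s : ℕ → ℕ) : LTree → Prop
  | leaf : IsSDec s .leaf
  | node (a : ℕ) (ts : List LTree) :
      ts.length = s a + 1 →
      (∀ t ∈ ts, IsSDec s t) →
      (∀ t ∈ ts, ∀ b ∈ t.labels, b < a) →
      IsSDec s (.node a ts)

/-!
Grafting a corolla labeled `a` (a node with `s a + 1` leaves as children) onto one of the
leaves of an `s`-decreasing tree whose labels all exceed `a` is a bijection onto the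
`s`-decreasing trees with one more label `a`; the inverse prunes the node `a` back to a leaf and
remembers which leaf it was. An `s`-decreasing tree with label set `S` has `1 + ∑_{b ∈ S} s b`
leaves, so adding the labels `n, n - 1, …, 1` one at a time multiplies the count by exactly the
factors of the product.
-/

namespace LTree

def numLeaves : LTree → ℕ
  | leaf => 1
  | node _ ts => (ts.map numLeaves).sum

theorem labels_leaf : labels leaf = 0 := by
  simp [labels]

theorem labels_node (a : ℕ) (ts : List LTree) :
    labels (node a ts) = a ::ₘ (ts.map labels).sum := by
  simp [labels]

theorem eq_leaf_of_labels_eq_zero {T : LTree} (h : labels T = 0) : T = leaf := by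
  cases T with
  | leaf => rfl
  | node a ts => simp [labels_node] at h

theorem mem_sum_map_labels {b : ℕ} {ts : List LTree} :
    b ∈ (ts.map labels).sum ↔ ∃ t ∈ ts, b ∈ labels t := by
  induction ts with
  | nil => simp
  | cons t ts ih => simp [ih]

mutual
/-- `graft u T p` replaces the `p`-th leaf of `T` (counted from `0`, left to right) by `u`. -/
def graft (u : LTree) : LTree → ℕ → LTree
  | leaf, p => if p = 0 then u else leaf
  | node a ts, p => node a (graftList u ts p)
def graftList (u : LTree) : List LTree → ℕ → List LTree
  | [], _ => []
  | t :: ts, p =>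
    if p < numLeaves t then graft u t p :: ts else t :: graftList u ts (p - numLeaves t)
end

mutual
/-- The index, in the numbering used by `graft`, of the leaf that `prune a T` puts in place of
the node labeled `a`. -/
def leavesBefore (a : ℕ) : LTree → ℕ
  | leaf => 0
  | node b ts => if b = a then 0 else leavesBeforeList a ts
def leavesBeforeList (a : ℕ) : List LTree → ℕ
  | [] => 0
  | t :: ts => if a ∈ labels t then leavesBefore a t else numLeaves t + leavesBeforeList a ts
end

def prune (a : ℕ) : LTree → LTree
  | leaf => leaf
  | node b ts => if b = a then leaf else node b (ts.map (prune a))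

def corolla (s : ℕ → ℕ) (a : ℕ) : LTree :=
  node a (List.replicate (s a + 1) leaf)

theorem labels_corolla (s : ℕ → ℕ) (a : ℕ) : labels (corolla s a) = {a} := by
  simp [corolla, labels_node, labels_leaf]

theorem isSDec_corolla (s : ℕ → ℕ) (a : ℕ) : IsSDec s (corolla s a) :=
  .node a _ List.length_replicate
    (fun _ ht => List.eq_of_mem_replicate ht ▸ .leaf)
    (fun _ ht b hb => by simp [List.eq_of_mem_replicate ht, labels_leaf] at hb)

theorem prune_corolla (s : ℕ → ℕ) (a : ℕ) : prune a (corolla s a) = leaf := by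
  simp [corolla, prune]

theorem leavesBefore_corolla (s : ℕ → ℕ) (a : ℕ) : leavesBefore a (corolla s a) = 0 := by
  simp [corolla, leavesBefore]

variable {s : ℕ → ℕ} {a : ℕ} {u : LTree}

mutual
theorem numLeaves_eq_of_isSDec : ∀ {T : LTree}, IsSDec s T →
    numLeaves T = 1 + ((labels T).map s).sum
  | leaf, _ => by simp [numLeaves, labels_leaf]
  | node b ts, .node _ _ hlen hts _ => by
    rw [numLeaves, sum_numLeaves_eq hts, labels_node, hlen]
    simp only [Multiset.map_cons, Multiset.sum_cons]
    ring
theorem sum_numLeaves_eq : ∀ {ts : List LTree}, (∀ t ∈ ts, IsSDec s t) →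
    (ts.map numLeaves).sum = ts.length + (((ts.map labels).sum).map s).sum
  | [], _ => by simp
  | t :: ts, h => by
    simp only [List.map_cons, List.sum_cons, List.length_cons, Multiset.map_add,
      Multiset.sum_add, numLeaves_eq_of_isSDec (h t List.mem_cons_self),
      sum_numLeaves_eq fun t' ht' => h t' (List.mem_cons_of_mem t ht')]
    ring
end

mutual
theorem labels_graft : ∀ {T : LTree} {p : ℕ}, p < numLeaves T →
    labels (graft u T p) = labels u + labels T
  | leaf, p, hp => by
    obtain rfl : p = 0 := by simpa [numLeaves] using hp
    simp [graft, labels_leaf]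
  | node b ts, p, hp => by
    rw [numLeaves] at hp
    rw [graft, labels_node, labels_node, sum_labels_graftList hp, Multiset.add_cons]
theorem sum_labels_graftList : ∀ {ts : List LTree} {p : ℕ}, p < (ts.map numLeaves).sum →
    ((graftList u ts p).map labels).sum = labels u + (ts.map labels).sum
  | [], p, hp => by simp at hp
  | t :: ts, p, hp => by
    rw [graftList]
    split_ifs with h
    · simp [labels_graft h, add_assoc]
    · simp only [List.map_cons, List.sum_cons] at hp ⊢
      rw [sum_labels_graftList (by omega), add_left_comm]
end

theorem length_graftList (ts : List LTree) (p : ℕ) : (graftList u ts p).length = ts.length := by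
  induction ts generalizing p with
  | nil => simp [graftList]
  | cons t ts ih => rw [graftList]; split_ifs <;> simp [ih]

mutual
theorem isSDec_graft (hu : IsSDec s u) : ∀ {T : LTree} {p : ℕ}, IsSDec s T →
    (∀ b ∈ labels u, ∀ c ∈ labels T, b < c) → p < numLeaves T → IsSDec s (graft u T p)
  | leaf, p, _, _, hp => by
    obtain rfl : p = 0 := by simpa [numLeaves] using hp
    simpa [graft] using hu
  | node b ts, p, .node _ _ hlen hts hdesc, hlt, hp => by
    rw [numLeaves] at hp
    rw [labels_node] at hlt
    have hlt' : ∀ c ∈ labels u, ∀ d ∈ (ts.map labels).sum, c < d := fun c hc d hd =>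
      hlt c hc d (Multiset.mem_cons_of_mem hd)
    refine .node b _ (by rw [length_graftList, hlen]) (isSDec_graftList hu hts hlt' hp) ?_
    intro x hx c hc
    have hc' : c ∈ labels u + (ts.map labels).sum := by
      rw [← sum_labels_graftList hp]; exact mem_sum_map_labels.2 ⟨x, hx, hc⟩
    rcases Multiset.mem_add.1 hc' with hcu | hcts
    · exact hlt c hcu b (Multiset.mem_cons_self b _)
    · obtain ⟨t, ht, hct⟩ := mem_sum_map_labels.1 hcts
      exact hdesc t ht c hct
theorem isSDec_graftList (hu : IsSDec s u) : ∀ {ts : List LTree} {p : ℕ},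
    (∀ t ∈ ts, IsSDec s t) → (∀ b ∈ labels u, ∀ c ∈ (ts.map labels).sum, b < c) →
    p < (ts.map numLeaves).sum → ∀ x ∈ graftList u ts p, IsSDec s x
  | [], _, _, _, _ => by simp [graftList]
  | t :: ts, p, hts, hlt, hp => by
    simp only [List.map_cons, List.sum_cons, Multiset.mem_add, List.forall_mem_cons] at hts hlt hp
    rw [graftList]
    split_ifs with h
    · simp only [List.forall_mem_cons]
      exact ⟨isSDec_graft hu hts.1 (fun b hb c hc => hlt b hb c (.inl hc)) h, hts.2⟩
    · simp only [List.forall_mem_cons]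
      exact ⟨hts.1,
        isSDec_graftList hu hts.2 (fun b hb c hc => hlt b hb c (.inr hc)) (by omega)⟩
end

mutual
theorem labels_prune_le : ∀ T : LTree, labels (prune a T) ≤ labels T
  | leaf => by simp [prune]
  | node b ts => by
    rw [prune]
    split_ifs
    · simp [labels_leaf]
    · rw [labels_node, labels_node, List.map_map]
      exact Multiset.cons_le_cons b (sum_labels_prune_le ts)
theorem sum_labels_prune_le : ∀ ts : List LTree,
    (ts.map (labels ∘ prune a)).sum ≤ (ts.map labels).sum
  | [] => le_rfl
  | t :: ts => by
    simp only [List.map_cons, List.sum_cons, Function.comp_apply]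
    exact add_le_add (labels_prune_le t) (sum_labels_prune_le ts)
end

theorem isSDec_prune {T : LTree} : IsSDec s T → IsSDec s (prune a T)
  | .leaf => by simpa [prune] using IsSDec.leaf
  | .node b ts hlen hts hdesc => by
    rw [prune]
    split_ifs
    · exact .leaf
    · refine .node b _ (by rw [List.length_map, hlen]) ?_ ?_
      · simp only [List.forall_mem_map]
        exact fun t ht => isSDec_prune (hts t ht)
      · simp only [List.forall_mem_map]
        exact fun t ht c hc => hdesc t ht c (Multiset.mem_of_le (labels_prune_le t) hc)

mutual
theorem prune_eq_self : ∀ {T : LTree}, a ∉ labels T → prune a T = T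
  | leaf, _ => by simp [prune]
  | node b ts, h => by
    rw [labels_node, Multiset.mem_cons, not_or] at h
    rw [prune, if_neg (Ne.symm h.1), map_prune_eq_self h.2]
theorem map_prune_eq_self : ∀ {ts : List LTree}, a ∉ (ts.map labels).sum →
    ts.map (prune a) = ts
  | [], _ => rfl
  | t :: ts, h => by
    simp only [List.map_cons, List.sum_cons, Multiset.mem_add, not_or] at h
    rw [List.map_cons, prune_eq_self h.1, map_prune_eq_self h.2]
end

mutual
theorem prune_graft (hu : prune a u = leaf) :
    ∀ {T : LTree} {p : ℕ}, a ∉ labels T → prune a (graft u T p) = T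
  | leaf, p, _ => by
    rw [graft]
    split_ifs
    · exact hu
    · simp [prune]
  | node b ts, p, h => by
    rw [labels_node, Multiset.mem_cons, not_or] at h
    rw [graft, prune, if_neg (Ne.symm h.1), map_prune_graftList hu h.2]
theorem map_prune_graftList (hu : prune a u = leaf) :
    ∀ {ts : List LTree} {p : ℕ}, a ∉ (ts.map labels).sum →
      (graftList u ts p).map (prune a) = ts
  | [], _, _ => by simp [graftList]
  | t :: ts, p, h => by
    simp only [List.map_cons, List.sum_cons, Multiset.mem_add, not_or] at h
    rw [graftList]
    split_ifs
    · rw [List.map_cons, prune_graft hu h.1, map_prune_eq_self h.2]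
    · rw [List.map_cons, prune_eq_self h.1, map_prune_graftList hu h.2]
end

mutual
theorem leavesBefore_graft (hau : a ∈ labels u) (hu : leavesBefore a u = 0) :
    ∀ {T : LTree} {p : ℕ}, a ∉ labels T → p < numLeaves T →
      leavesBefore a (graft u T p) = p
  | leaf, p, _, hp => by
    obtain rfl : p = 0 := by simpa [numLeaves] using hp
    simpa [graft] using hu
  | node b ts, p, h, hp => by
    rw [labels_node, Multiset.mem_cons, not_or] at h
    rw [numLeaves] at hp
    rw [graft, leavesBefore, if_neg (Ne.symm h.1), leavesBeforeList_graftList hau hu h.2 hp]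
theorem leavesBeforeList_graftList (hau : a ∈ labels u) (hu : leavesBefore a u = 0) :
    ∀ {ts : List LTree} {p : ℕ}, a ∉ (ts.map labels).sum → p < (ts.map numLeaves).sum →
      leavesBeforeList a (graftList u ts p) = p
  | [], _, _, hp => by simp at hp
  | t :: ts, p, h, hp => by
    simp only [List.map_cons, List.sum_cons, Multiset.mem_add, not_or] at h hp
    rw [graftList]
    split_ifs with hpt
    · rw [leavesBeforeList, if_pos (by rw [labels_graft hpt]; exact Multiset.mem_add.2 (.inl hau)),
        leavesBefore_graft hau hu h.1 hpt]
    · rw [leavesBeforeList, if_neg h.1, leavesBeforeList_graftList hau hu h.2 (by omega)]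
      omega
end

mutual
theorem leavesBefore_lt_numLeaves_prune : ∀ {T : LTree}, a ∈ labels T →
    leavesBefore a T < numLeaves (prune a T)
  | leaf, h => by simp [labels_leaf] at h
  | node b ts, h => by
    rw [leavesBefore, prune]
    split_ifs with hb
    · simp [numLeaves]
    · rw [labels_node, Multiset.mem_cons, or_iff_right (Ne.symm hb)] at h
      rw [numLeaves, List.map_map]
      exact leavesBeforeList_lt_sum_numLeaves_prune h
theorem leavesBeforeList_lt_sum_numLeaves_prune : ∀ {ts : List LTree},
    a ∈ (ts.map labels).sum → leavesBeforeList a ts < (ts.map (numLeaves ∘ prune a)).sum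
  | [], h => by simp at h
  | t :: ts, h => by
    simp only [List.map_cons, List.sum_cons, Multiset.mem_add, Function.comp_apply] at h ⊢
    rw [leavesBeforeList]
    split_ifs with ht
    · have := leavesBefore_lt_numLeaves_prune ht
      omega
    · rw [prune_eq_self ht]
      have := leavesBeforeList_lt_sum_numLeaves_prune (h.resolve_left ht)
      omega
end

theorem eq_corolla_of_isSDec {ts : List LTree} (h : IsSDec s (node a ts))
    (hmin : ∀ t ∈ ts, ∀ b ∈ labels t, a ≤ b) : node a ts = corolla s a := by
  obtain _ | ⟨_, _, hlen, -, hdesc⟩ := h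
  have hleaf : ∀ t ∈ ts, t = leaf := fun t ht =>
    eq_leaf_of_labels_eq_zero <| Multiset.eq_zero_of_forall_notMem fun b hb =>
      (hmin t ht b hb).not_gt (hdesc t ht b hb)
  rw [corolla, List.eq_replicate_iff.2 ⟨hlen, hleaf⟩]

mutual
theorem graft_corolla_prune : ∀ {T : LTree}, IsSDec s T → (labels T).Nodup →
    (∀ b ∈ labels T, a ≤ b) → a ∈ labels T →
    graft (corolla s a) (prune a T) (leavesBefore a T) = T
  | leaf, _, _, _, ha => by simp [labels_leaf] at ha
  | node b ts, hT, hnd, hmin, ha => by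
    rw [labels_node] at hnd hmin ha
    rw [prune, leavesBefore]
    split_ifs with hb
    · subst hb
      rw [graft, if_pos rfl, eq_corolla_of_isSDec hT fun t ht c hc =>
        hmin c (Multiset.mem_cons_of_mem (mem_sum_map_labels.2 ⟨t, ht, hc⟩))]
    · obtain _ | ⟨_, _, -, hts, -⟩ := hT
      rw [graft, graftList_corolla_map_prune hts (Multiset.nodup_cons.1 hnd).2
        (fun c hc => hmin c (Multiset.mem_cons_of_mem hc))
        ((Multiset.mem_cons.1 ha).resolve_left (Ne.symm hb))]
theorem graftList_corolla_map_prune : ∀ {ts : List LTree}, (∀ t ∈ ts, IsSDec s t) →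
    ((ts.map labels).sum).Nodup → (∀ b ∈ (ts.map labels).sum, a ≤ b) →
    a ∈ (ts.map labels).sum →
    graftList (corolla s a) (ts.map (prune a)) (leavesBeforeList a ts) = ts
  | [], _, _, _, ha => by simp at ha
  | t :: ts, hts, hnd, hmin, ha => by
    simp only [List.map_cons, List.sum_cons, Multiset.mem_add, List.forall_mem_cons,
      Multiset.nodup_add] at hts hnd hmin ha
    rw [List.map_cons, leavesBeforeList]
    split_ifs with hat
    · rw [map_prune_eq_self (Multiset.disjoint_left.1 hnd.2.2 hat), graftList,
        if_pos (leavesBefore_lt_numLeaves_prune hat),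
        graft_corolla_prune hts.1 hnd.1 (fun c hc => hmin c (.inl hc)) hat]
    · rw [prune_eq_self hat, graftList, if_neg (by omega), Nat.add_sub_cancel_left,
        graftList_corolla_map_prune hts.2 hnd.2.1 (fun c hc => hmin c (.inr hc))
          (ha.resolve_left hat)]
end

end LTree

open LTree

def sDecreasingTrees (s : ℕ → ℕ) (S : Finset ℕ) : Set LTree :=
  {T | IsSDec s T ∧ T.labels = S.val}

section InsertMin

variable {s : ℕ → ℕ} {a : ℕ} {S : Finset ℕ}

theorem numLeaves_eq_of_mem_sDecreasingTrees {T : LTree} (hT : T ∈ sDecreasingTrees s S) :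
    numLeaves T = 1 + ∑ b ∈ S, s b := by
  rw [numLeaves_eq_of_isSDec hT.1, hT.2]
  rfl

theorem notMem_labels_of_mem_sDecreasingTrees {T : LTree} (hT : T ∈ sDecreasingTrees s S)
    (ha : a ∉ S) : a ∉ labels T := by
  rwa [hT.2]

theorem mapsTo_graft_corolla (ha : ∀ b ∈ S, a < b) :
    Set.MapsTo (Function.uncurry (graft (corolla s a)))
      (sDecreasingTrees s S ×ˢ Set.Iio (1 + ∑ b ∈ S, s b))
      (sDecreasingTrees s (insert a S)) := by
  rintro ⟨T, p⟩ ⟨hT, hp⟩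
  rw [Set.mem_Iio, ← numLeaves_eq_of_mem_sDecreasingTrees hT] at hp
  rw [Function.uncurry_apply_pair]
  refine ⟨isSDec_graft (isSDec_corolla s a) hT.1 ?_ hp, ?_⟩
  · rw [labels_corolla, hT.2]
    rintro b hb c hc
    rw [Multiset.mem_singleton.1 hb]
    exact ha c hc
  · rw [labels_graft hp, labels_corolla, hT.2,
      Finset.insert_val_of_notMem fun h => (ha a h).false, Multiset.singleton_add]

theorem injOn_graft_corolla (ha : a ∉ S) :
    Set.InjOn (Function.uncurry (graft (corolla s a)))
      (sDecreasingTrees s S ×ˢ Set.Iio (1 + ∑ b ∈ S, s b)) := by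
  rintro ⟨T₁, p₁⟩ ⟨hT₁, hp₁⟩ ⟨T₂, p₂⟩ ⟨hT₂, hp₂⟩ h
  rw [Set.mem_Iio, ← numLeaves_eq_of_mem_sDecreasingTrees hT₁] at hp₁
  rw [Set.mem_Iio, ← numLeaves_eq_of_mem_sDecreasingTrees hT₂] at hp₂
  have ha₁ := notMem_labels_of_mem_sDecreasingTrees hT₁ ha
  have ha₂ := notMem_labels_of_mem_sDecreasingTrees hT₂ ha
  have hmem : a ∈ labels (corolla s a) := by simp [labels_corolla]
  simp only [Function.uncurry_apply_pair] at h
  ext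
  · rw [← prune_graft (prune_corolla s a) ha₁, h, prune_graft (prune_corolla s a) ha₂]
  · rw [← leavesBefore_graft hmem (leavesBefore_corolla s a) ha₁ hp₁, h,
      leavesBefore_graft hmem (leavesBefore_corolla s a) ha₂ hp₂]

theorem surjOn_graft_corolla (ha : ∀ b ∈ S, a < b) :
    Set.SurjOn (Function.uncurry (graft (corolla s a)))
      (sDecreasingTrees s S ×ˢ Set.Iio (1 + ∑ b ∈ S, s b))
      (sDecreasingTrees s (insert a S)) := by
  rintro T ⟨hT, hlab⟩
  rw [Finset.insert_val_of_notMem fun h => (ha a h).false] at hlab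
  have hmem : a ∈ labels T := hlab ▸ Multiset.mem_cons_self a _
  have hmin : ∀ b ∈ labels T, a ≤ b := by
    rw [hlab]
    rintro b hb
    rcases Multiset.mem_cons.1 hb with rfl | hb
    exacts [le_rfl, (ha b hb).le]
  have hnd : (labels T).Nodup :=
    hlab ▸ Multiset.nodup_cons.2 ⟨fun h => (ha a h).false, S.nodup⟩
  have hgraft := graft_corolla_prune hT hnd hmin hmem
  have hlt := leavesBefore_lt_numLeaves_prune hmem
  have hprune : prune a T ∈ sDecreasingTrees s S := by
    refine ⟨isSDec_prune hT, ?_⟩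
    have := labels_graft (u := corolla s a) hlt
    rwa [hgraft, hlab, labels_corolla, Multiset.singleton_add, Multiset.cons_inj_right,
      eq_comm] at this
  refine ⟨(prune a T, leavesBefore a T), ⟨hprune, ?_⟩, hgraft⟩
  rwa [Set.mem_Iio, ← numLeaves_eq_of_mem_sDecreasingTrees hprune]

theorem ncard_sDecreasingTrees_insert (ha : ∀ b ∈ S, a < b) :
    (sDecreasingTrees s (insert a S)).ncard =
      (sDecreasingTrees s S).ncard * (1 + ∑ b ∈ S, s b) := by
  have hbij : Set.BijOn _ _ _ := ⟨mapsTo_graft_corolla (s := s) ha,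
    injOn_graft_corolla fun h => (ha a h).false, surjOn_graft_corolla ha⟩
  rw [← hbij.image_eq, hbij.injOn.ncard_image, Set.ncard_prod, Set.ncard_Iio_nat]

end InsertMin

theorem sDecreasingTrees_empty (s : ℕ → ℕ) : sDecreasingTrees s ∅ = {leaf} := by
  ext T
  constructor
  · rintro ⟨-, h⟩
    exact eq_leaf_of_labels_eq_zero h
  · rintro rfl
    exact ⟨.leaf, labels_leaf⟩

theorem ncard_sDecreasingTrees_Icc (s : ℕ → ℕ) {n m : ℕ} (hm : m ≤ n) :
    (sDecreasingTrees s (Finset.Icc (n - m) n)).ncard =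
      ∏ i ∈ Finset.Icc 1 m, (1 + ∑ r ∈ Finset.Icc (n - i + 1) n, s r) := by
  induction m with
  | zero =>
    rw [Nat.sub_zero, Finset.Icc_self, ← insert_empty_eq, ncard_sDecreasingTrees_insert (by simp),
      sDecreasingTrees_empty]
    simp
  | succ m ih =>
    rw [← Finset.insert_Icc_add_one_left_eq_Icc (by omega), show n - (m + 1) + 1 = n - m by omega,
      ncard_sDecreasingTrees_insert (fun b hb => by simp at hb; omega), ih (by omega),
      Finset.prod_Icc_succ_top (by omega), show n - (m + 1) + 1 = n - m by omega]

/-- The number of `s`-decreasing trees (internal nodes labeled bijectively by `[n]`,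
node `i` having `s i + 1` children, descendants having smaller labels) equals
`∏_{i=1}^{n-1} (1 + s_{n-i+1} + s_{n-i+2} + ⋯ + s_n)`. -/
theorem card_s_decreasing_trees (n : ℕ) (s : ℕ → ℕ) :
    {T : LTree | IsSDec s T ∧ T.labels = (Finset.Icc 1 n).val}.ncard =
      ∏ i ∈ Finset.Icc 1 (n - 1), (1 + ∑ r ∈ Finset.Icc (n - i + 1) n, s r) := by
  change (sDecreasingTrees s (Finset.Icc 1 n)).ncard = _
  cases n with
  | zero => simp [sDecreasingTrees_empty]
  | succ n => simpa using ncard_sDecreasingTrees_Icc s n.le_succ
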